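/- arXiv:1808.04906 — 5 statements merged into one kernel-verified Lean document; each statement's English description precedes it below -/
import Mathlib

section
/- Let M be an invertible (k+1)×(k+1) real matrix whose column sums all equal 1, let J be the (k+1)×k matrix with first row −𝟙 and remaining rows I_k, and let Ξ be the k×k matrix with entries Ξ_{i,j} = M_{i+1,j+1} − M_{i+1,1}. Then Ξ is invertible. -/
/-!
The matrix `J` maps the basis vector `e_j` of `ℝ^k` to `e_{j+1} - e_0`, so `M * J` has columns
`M e_{j+1} - M e_0`. Since the columns of `M` sum to one, those of `M * J` sum to zero, and a matrix
with zero column sums is `J` times its lower `k` rows; here those rows form `Ξ`, so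
`M * J = J * Ξ`. As `J` is injective and `M` invertible, `Ξ` is injective, hence invertible.
-/

open Matrix

namespace Matrix

theorem isUnit_det_of_mul_eq_mul {m n K : Type*} [Fintype m] [DecidableEq m] [Fintype n]
    [DecidableEq n] [Field K] {M : Matrix m m K} {J : Matrix m n K} {Ξ : Matrix n n K}
    (hM : IsUnit M.det) (hJ : Function.Injective J.mulVec) (h : M * J = J * Ξ) :
    IsUnit Ξ.det := by
  have hM_inj : Function.Injective M.mulVec :=
    mulVec_injective_iff_isUnit.mpr ((isUnit_iff_isUnit_det M).mpr hM)
  rw [← isUnit_iff_isUnit_det, ← mulVec_injective_iff_isUnit]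
  intro v w hvw
  apply hJ
  apply hM_inj
  rw [mulVec_mulVec, mulVec_mulVec, h, ← mulVec_mulVec, ← mulVec_mulVec, hvw]

end Matrix

section ContrastBasis

variable (R : Type*) [Ring R] (k : ℕ)

def contrastBasis : Matrix (Fin (k + 1)) (Fin k) R :=
  of fun i j => if i = j.succ then 1 else if i = 0 then -1 else 0

variable {R k}

theorem contrastBasis_zero : contrastBasis R k 0 = fun _ => -1 := by
  ext j
  simp [contrastBasis, (Fin.succ_ne_zero j).symm]

theorem contrastBasis_succ (i : Fin k) : contrastBasis R k i.succ = Pi.single i 1 := by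
  ext j
  by_cases hij : j = i
  · subst hij; simp [contrastBasis]
  · simp [contrastBasis, hij, Ne.symm hij, Fin.succ_ne_zero]

theorem mul_contrastBasis_apply {m : Type*} (A : Matrix m (Fin (k + 1)) R) (i : m) (j : Fin k) :
    (A * contrastBasis R k) i j = A i j.succ - A i 0 := by
  have hcol : (fun l => contrastBasis R k l j) = Pi.single j.succ 1 - Pi.single 0 1 := by
    ext l
    rcases Fin.eq_zero_or_eq_succ l with rfl | ⟨l, rfl⟩
    · simp [contrastBasis_zero, (Fin.succ_ne_zero j).symm]
    · simp [contrastBasis_succ, Pi.single_apply, Fin.succ_ne_zero, eq_comm]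
  rw [mul_apply', hcol, dotProduct_sub, dotProduct_single_one, dotProduct_single_one]

theorem contrastBasis_mulVec_succ (v : Fin k → R) (i : Fin k) :
    (contrastBasis R k *ᵥ v) i.succ = v i := by
  rw [mulVec, contrastBasis_succ, single_one_dotProduct]

theorem contrastBasis_mulVec_injective : Function.Injective (contrastBasis R k).mulVec :=
  fun v w h => funext fun i => by
    rw [← contrastBasis_mulVec_succ v i, ← contrastBasis_mulVec_succ w i, h]

theorem contrastBasis_mul_submatrix_succ {n : Type*} [Fintype n] {A : Matrix (Fin (k + 1)) n R}
    (hA : ∀ j, ∑ i, A i j = 0) : contrastBasis R k * A.submatrix Fin.succ id = A := by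
  ext i j
  rcases Fin.eq_zero_or_eq_succ i with rfl | ⟨i, rfl⟩
  · have hA0 : A 0 j = -∑ l : Fin k, A l.succ j := by
      rw [eq_neg_iff_add_eq_zero, ← Fin.sum_univ_succ (f := fun l => A l j), hA]
    simp [mul_apply, contrastBasis_zero, hA0]
  · simp [mul_apply, contrastBasis_succ, Pi.single_apply]

end ContrastBasis

/-- If `M` is an invertible `(k+1) × (k+1)` real matrix with column sums all 1, then
the `k × k` contrast matrix `Ξ i j = M (i+1) (j+1) - M (i+1) 0` is invertible. -/
theorem contrast_matrix_invertible {k : ℕ} (M : Matrix (Fin (k+1)) (Fin (k+1)) ℝ)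
    (hM : IsUnit M.det)
    (hMcol : ∀ j, ∑ i, M i j = 1)
    (J : Matrix (Fin (k+1)) (Fin k) ℝ)
    (hJ : ∀ i j, J i j = if i = j.succ then 1 else if i = 0 then -1 else 0)
    (Ξ : Matrix (Fin k) (Fin k) ℝ)
    (hΞ : ∀ i j, Ξ i j = M i.succ j.succ - M i.succ 0) :
    IsUnit Ξ.det := by
  obtain rfl : J = contrastBasis ℝ k := Matrix.ext hJ
  have hMJ_col : ∀ j, ∑ i, (M * contrastBasis ℝ k) i j = 0 := fun j => by
    simp only [mul_contrastBasis_apply, Finset.sum_sub_distrib, hMcol, sub_self]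
  have hΞ_rows : Ξ = (M * contrastBasis ℝ k).submatrix Fin.succ id := Matrix.ext fun i j => by
    rw [hΞ, submatrix_apply, mul_contrastBasis_apply, id]
  refine isUnit_det_of_mul_eq_mul hM contrastBasis_mulVec_injective ?_
  rw [hΞ_rows, contrastBasis_mul_submatrix_succ hMJ_col]
end

section
/- Let M be an invertible (k+1)×(k+1) real matrix with all column sums equal to 1, J the (k+1)×k matrix with first row −𝟙 and remaining rows I_k, Ξ the k×k matrix Ξ_{i,j} = M_{i+1,j+1} − M_{i+1,1}, and let D be a (k+1)×(k+1) matrix with column sums all 0 and p a column vector of length k+1. Write d ∈ ℝᵏ for the last k coordinates of D·p. Then M⁻¹·D·p = J·Ξ⁻¹·d. -/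
/-!
Vectors with coordinate sum zero are exactly the image of the injective map `J`, which
reconstructs the first coordinate from the other `k`. A matrix whose column sums are all
equal maps such vectors to such vectors, and in the coordinates given by `J` it acts by its
contrast matrix `Ξ`: `M * J = J * Ξ`. Since `M` is invertible and `J` injective, `Ξ` is
invertible and `M⁻¹ * J = J * Ξ⁻¹`; apply this to `D * p = J * d`.
-/

namespace Matrix

variable {R : Type*} [CommRing R] {k : ℕ}

theorem sum_mulVec_of_sum_col_eq {m n : Type*} [Fintype m] [Fintype n] (A : Matrix m n R)
    {c : R} (hA : ∀ j, ∑ i, A i j = c) (x : n → R) :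
    ∑ i, (A *ᵥ x) i = c * ∑ j, x j := by
  simp only [mulVec, dotProduct]
  rw [Finset.sum_comm, Finset.mul_sum]
  simp only [← Finset.sum_mul, hA]

variable (R k) in
def sumZeroEmbedding : Matrix (Fin (k + 1)) (Fin k) R :=
  fun i j => if i = j.succ then 1 else if i = 0 then -1 else 0

def contrast (A : Matrix (Fin (k + 1)) (Fin (k + 1)) R) : Matrix (Fin k) (Fin k) R :=
  fun i j => A i.succ j.succ - A i.succ 0

@[simp]
theorem sumZeroEmbedding_mulVec_zero (x : Fin k → R) :
    (sumZeroEmbedding R k *ᵥ x) 0 = -∑ j, x j := by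
  simp [sumZeroEmbedding, mulVec, dotProduct, (Fin.succ_ne_zero _).symm]

@[simp]
theorem sumZeroEmbedding_mulVec_succ (x : Fin k → R) (i : Fin k) :
    (sumZeroEmbedding R k *ᵥ x) i.succ = x i := by
  simp [sumZeroEmbedding, mulVec, dotProduct, Fin.succ_ne_zero]

theorem sum_sumZeroEmbedding_mulVec (x : Fin k → R) :
    ∑ i, (sumZeroEmbedding R k *ᵥ x) i = 0 := by
  simp [Fin.sum_univ_succ]

theorem sumZeroEmbedding_mulVec_injective :
    Function.Injective (sumZeroEmbedding R k *ᵥ ·) := fun x y h => by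
  funext i
  simpa using congrFun h i.succ

theorem eq_sumZeroEmbedding_mulVec_tail {v : Fin (k + 1) → R} (hv : ∑ i, v i = 0) :
    v = sumZeroEmbedding R k *ᵥ Fin.tail v := by
  rw [Fin.sum_univ_succ] at hv
  funext i
  cases i using Fin.cases with
  | zero => simp [Fin.tail, eq_neg_of_add_eq_zero_left hv]
  | succ i => simp [Fin.tail]

theorem mulVec_sumZeroEmbedding_mulVec {A : Matrix (Fin (k + 1)) (Fin (k + 1)) R} {c : R}
    (hA : ∀ j, ∑ i, A i j = c) (x : Fin k → R) :
    A *ᵥ (sumZeroEmbedding R k *ᵥ x) = sumZeroEmbedding R k *ᵥ (contrast A *ᵥ x) := by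
  have hsum : ∑ i, (A *ᵥ (sumZeroEmbedding R k *ᵥ x)) i = 0 := by
    rw [sum_mulVec_of_sum_col_eq A hA, sum_sumZeroEmbedding_mulVec, mul_zero]
  rw [eq_sumZeroEmbedding_mulVec_tail hsum]
  congr 1
  funext i
  change (A *ᵥ _) i.succ = _
  rw [mulVec, dotProduct, Fin.sum_univ_succ]
  simp only [sumZeroEmbedding_mulVec_zero, sumZeroEmbedding_mulVec_succ]
  simp only [contrast, mulVec, dotProduct, sub_mul, Finset.sum_sub_distrib, ← Finset.mul_sum]
  ring

theorem inv_mulVec_mulVec_of_mulVec_mulVec {K m n : Type*} [Field K] [Fintype m]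
    [DecidableEq m] [Fintype n] [DecidableEq n] {M : Matrix m m K} {Ξ : Matrix n n K}
    {E : Matrix m n K} (hM : IsUnit M.det) (hE : Function.Injective (E *ᵥ ·))
    (hME : ∀ x, M *ᵥ (E *ᵥ x) = E *ᵥ (Ξ *ᵥ x)) (y : n → K) :
    M⁻¹ *ᵥ (E *ᵥ y) = E *ᵥ (Ξ⁻¹ *ᵥ y) := by
  have hMinj : Function.Injective (M *ᵥ ·) :=
    mulVec_injective_iff_isUnit.2 ((isUnit_iff_isUnit_det M).2 hM)
  have hΞ : IsUnit Ξ.det := by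
    refine (isUnit_iff_isUnit_det Ξ).1 (mulVec_injective_iff_isUnit.1 fun x x' h => ?_)
    refine hE (hMinj ?_)
    simp only [hME, h]
  calc M⁻¹ *ᵥ (E *ᵥ y) = M⁻¹ *ᵥ (M *ᵥ (E *ᵥ (Ξ⁻¹ *ᵥ y))) := by
        rw [hME, mulVec_mulVec y Ξ Ξ⁻¹, mul_nonsing_inv Ξ hΞ, one_mulVec]
    _ = E *ᵥ (Ξ⁻¹ *ᵥ y) := by rw [mulVec_mulVec, nonsing_inv_mul M hM, one_mulVec]

end Matrix

open Matrix

/-- Key matrix identity: with `M` invertible with column sums 1, `D` with column sums 0,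
`J` the `(k+1) × k` matrix with first row `-𝟙` and remaining rows `I_k`, `Ξ` the contrast
matrix of `M`, and `d` the last `k` coordinates of `D *ᵥ p`, one has
`M⁻¹ *ᵥ (D *ᵥ p) = J *ᵥ (Ξ⁻¹ *ᵥ d)`. -/
theorem key_matrix_identity {k : ℕ} (M D : Matrix (Fin (k+1)) (Fin (k+1)) ℝ)
    (hM : IsUnit M.det)
    (hMcol : ∀ j, ∑ i, M i j = 1)
    (hDcol : ∀ j, ∑ i, D i j = 0)
    (p : Fin (k+1) → ℝ)
    (J : Matrix (Fin (k+1)) (Fin k) ℝ)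
    (hJ : ∀ i j, J i j = if i = j.succ then 1 else if i = 0 then -1 else 0)
    (Ξ : Matrix (Fin k) (Fin k) ℝ)
    (hΞ : ∀ i j, Ξ i j = M i.succ j.succ - M i.succ 0)
    (d : Fin k → ℝ)
    (hd : ∀ j, d j = (D.mulVec p) j.succ) :
    M⁻¹.mulVec (D.mulVec p) = J.mulVec (Ξ⁻¹.mulVec d) := by
  obtain rfl : J = sumZeroEmbedding ℝ k := Matrix.ext hJ
  obtain rfl : Ξ = contrast M := Matrix.ext hΞ
  have hDp : D *ᵥ p = sumZeroEmbedding ℝ k *ᵥ d := by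
    have hsum : ∑ i, (D *ᵥ p) i = 0 := by
      rw [sum_mulVec_of_sum_col_eq D hDcol, zero_mul]
    rw [eq_sumZeroEmbedding_mulVec_tail hsum, funext hd]
    rfl
  rw [hDp]
  exact inv_mulVec_mulVec_of_mulVec_mulVec hM sumZeroEmbedding_mulVec_injective
    (mulVec_sumZeroEmbedding_mulVec hMcol) d
end

section
/- Let Y, W, A, Z be random variables and U, X random variables such that (i) Y ⟂ Z | (U, X, A) and (ii) W ⟂ (Z, A) | (U, X), with U, Z, W finite-valued. Then for each a, x: (a) the matrix P(W|Z, a, x) with entries P(W=wᵢ | Z=zⱼ, A=a, X=x) factors as P(W|Z,a,x) = P(W|U,x) · P(U|Z,a,x), where P(W|U,x) has entries P(W=wᵢ|U=uₛ, X=x) and P(U|Z,a,x) has entries P(U=uₛ|Z=zⱼ, A=a, X=x); and (b) the row vector E[Y|Z,a,x] factors as E[Y|Z,a,x] = E[Y|U,a,x] · P(U|Z,a,x). -/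
open scoped Classical

/-- Probability of an event under a weight function on a finite sample space. -/
noncomputable def prSum {Ω : Type*} [Fintype Ω] (μ : Ω → ℝ) (s : Ω → Prop) : ℝ :=
  ∑ ω ∈ Finset.univ.filter s, μ ω

/-- Conditional expectation of `Y` given an event under a weight function. -/
noncomputable def ceSum {Ω : Type*} [Fintype Ω] (μ : Ω → ℝ) (Y : Ω → ℝ) (s : Ω → Prop) : ℝ :=
  (∑ ω ∈ Finset.univ.filter s, μ ω * Y ω) / prSum μ s

section Aux

variable {Ω : Type*} [Fintype Ω]

/-- Weighted sum of `F` over an event (classical decidability, matching `prSum`). -/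
noncomputable def wSum (F : Ω → ℝ) (s : Ω → Prop) : ℝ :=
  ∑ ω ∈ Finset.univ.filter s, F ω

lemma prSum_eq_wSum (μ : Ω → ℝ) (s : Ω → Prop) : prSum μ s = wSum μ s := rfl

lemma ceSum_eq (μ Y : Ω → ℝ) (s : Ω → Prop) :
    ceSum μ Y s = wSum (fun ω => μ ω * Y ω) s / prSum μ s := rfl

lemma wSum_congr (F : Ω → ℝ) {s t : Ω → Prop} (h : ∀ ω, s ω ↔ t ω) :
    wSum F s = wSum F t := by
  unfold wSum
  refine Finset.sum_congr ?_ fun _ _ => rfl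
  ext ω
  simp [h ω]

lemma prSum_congr (μ : Ω → ℝ) {s t : Ω → Prop} (h : ∀ ω, s ω ↔ t ω) :
    prSum μ s = prSum μ t := by
  rw [prSum_eq_wSum, prSum_eq_wSum]; exact wSum_congr μ h

lemma prSum_mono (μ : Ω → ℝ) (hμ : ∀ ω, 0 ≤ μ ω) {s t : Ω → Prop} (h : ∀ ω, s ω → t ω) :
    prSum μ s ≤ prSum μ t := by
  apply Finset.sum_le_sum_of_subset_of_nonneg
  · intro ω hω
    simp only [Finset.mem_filter, Finset.mem_univ, true_and] at *
    exact h ω hω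
  · intro ω _ _; exact hμ ω

/-- Decompose a weighted sum over an event by the fibers of a map into a fintype. -/
lemma wSum_decomp {α : Type*} [Fintype α] (f : Ω → α) (F : Ω → ℝ) (s : Ω → Prop) :
    wSum F s = ∑ a : α, wSum F (fun ω => f ω = a ∧ s ω) := by
  unfold wSum
  rw [← Finset.sum_fiberwise (Finset.univ.filter s) f F]
  refine Finset.sum_congr rfl fun a _ => Finset.sum_congr ?_ fun _ _ => rfl
  ext ω
  simp [and_comm]

lemma prSum_decomp {α : Type*} [Fintype α] (μ : Ω → ℝ) (f : Ω → α) (s : Ω → Prop) :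
    prSum μ s = ∑ a : α, prSum μ (fun ω => f ω = a ∧ s ω) := by
  simp only [prSum_eq_wSum]
  exact wSum_decomp f μ s

/-- Express the `μ·Y`-weighted sum over an event via the values of `Y`. -/
lemma wSum_eq_sum_image (μ Y : Ω → ℝ) (s : Ω → Prop) :
    wSum (fun ω => μ ω * Y ω) s
      = ∑ y ∈ Finset.univ.image Y, y * prSum μ (fun ω => Y ω = y ∧ s ω) := by
  have h1 : ∀ y : ℝ, y * prSum μ (fun ω => Y ω = y ∧ s ω)
      = ∑ ω ∈ (Finset.univ.filter s).filter (fun ω => Y ω = y), μ ω * Y ω := by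
    intro y
    rw [prSum, Finset.mul_sum]
    refine Finset.sum_congr ?_ fun ω hω => ?_
    · ext ω; simp [and_comm]
    · simp only [Finset.mem_filter] at hω
      rw [hω.2]; ring
  calc wSum (fun ω => μ ω * Y ω) s = ∑ ω ∈ Finset.univ.filter s, μ ω * Y ω := rfl
    _ = ∑ y ∈ Finset.univ.image Y,
          ∑ ω ∈ (Finset.univ.filter s).filter (fun ω => Y ω = y), μ ω * Y ω :=
        (Finset.sum_fiberwise_of_maps_to
          (fun ω _ => Finset.mem_image_of_mem Y (Finset.mem_univ ω)) _).symm
    _ = _ := Finset.sum_congr rfl fun y _ => (h1 y).symm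

end Aux

/-- Under (i) `Y ⟂ Z | (U, X, A)` and (ii) `W ⟂ (Z, A) | (U, X)`, the conditional
probability matrix `P(W|Z,a,x)` factors as `P(W|U,x) · P(U|Z,a,x)` and the row vector
`E[Y|Z,a,x]` factors as `E[Y|U,a,x] · P(U|Z,a,x)`. -/
theorem negcontrol_factorization {Ω χ : Type*} [Fintype Ω] {nW nZ nU : ℕ}
    (μ : Ω → ℝ) (hμ : ∀ ω, 0 ≤ μ ω) (hsum : ∑ ω, μ ω = 1)
    (Y : Ω → ℝ) (W : Ω → Fin nW) (Z : Ω → Fin nZ) (U : Ω → Fin nU)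
    (A : Ω → Bool) (X : Ω → χ)
    (hpos : ∀ (u : Fin nU) (z : Fin nZ) (a : Bool) (x : χ),
      0 < prSum μ (fun ω => U ω = u ∧ Z ω = z ∧ A ω = a ∧ X ω = x))
    -- (i) Y ⟂ Z | (U, X, A)
    (hYZ : ∀ (y : ℝ) (z : Fin nZ) (u : Fin nU) (x : χ) (a : Bool),
      prSum μ (fun ω => Y ω = y ∧ Z ω = z ∧ U ω = u ∧ X ω = x ∧ A ω = a)
          * prSum μ (fun ω => U ω = u ∧ X ω = x ∧ A ω = a)
        = prSum μ (fun ω => Y ω = y ∧ U ω = u ∧ X ω = x ∧ A ω = a)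
          * prSum μ (fun ω => Z ω = z ∧ U ω = u ∧ X ω = x ∧ A ω = a))
    -- (ii) W ⟂ (Z, A) | (U, X)
    (hWZA : ∀ (w : Fin nW) (z : Fin nZ) (a : Bool) (u : Fin nU) (x : χ),
      prSum μ (fun ω => W ω = w ∧ Z ω = z ∧ A ω = a ∧ U ω = u ∧ X ω = x)
          * prSum μ (fun ω => U ω = u ∧ X ω = x)
        = prSum μ (fun ω => W ω = w ∧ U ω = u ∧ X ω = x)
          * prSum μ (fun ω => Z ω = z ∧ A ω = a ∧ U ω = u ∧ X ω = x)) :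
    -- (a) P(W|Z,a,x) = P(W|U,x) · P(U|Z,a,x)
    (∀ (w : Fin nW) (z : Fin nZ) (a : Bool) (x : χ),
      prSum μ (fun ω => W ω = w ∧ Z ω = z ∧ A ω = a ∧ X ω = x)
          / prSum μ (fun ω => Z ω = z ∧ A ω = a ∧ X ω = x)
        = ∑ u : Fin nU,
            (prSum μ (fun ω => W ω = w ∧ U ω = u ∧ X ω = x)
                / prSum μ (fun ω => U ω = u ∧ X ω = x))
              * (prSum μ (fun ω => U ω = u ∧ Z ω = z ∧ A ω = a ∧ X ω = x)
                / prSum μ (fun ω => Z ω = z ∧ A ω = a ∧ X ω = x)))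
    ∧
    -- (b) E[Y|Z,a,x] = E[Y|U,a,x] · P(U|Z,a,x)
    (∀ (z : Fin nZ) (a : Bool) (x : χ),
      ceSum μ Y (fun ω => Z ω = z ∧ A ω = a ∧ X ω = x)
        = ∑ u : Fin nU,
            ceSum μ Y (fun ω => U ω = u ∧ A ω = a ∧ X ω = x)
              * (prSum μ (fun ω => U ω = u ∧ Z ω = z ∧ A ω = a ∧ X ω = x)
                / prSum μ (fun ω => Z ω = z ∧ A ω = a ∧ X ω = x))) := by
  -- positivity of marginal events
  have hposUX : ∀ (u : Fin nU) (x : χ) (z : Fin nZ) (a : Bool),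
      0 < prSum μ (fun ω => U ω = u ∧ X ω = x) := by
    intro u x z a
    refine lt_of_lt_of_le (hpos u z a x) (prSum_mono μ hμ ?_)
    tauto
  have hposUXA : ∀ (u : Fin nU) (x : χ) (a : Bool) (z : Fin nZ),
      0 < prSum μ (fun ω => U ω = u ∧ X ω = x ∧ A ω = a) := by
    intro u x a z
    refine lt_of_lt_of_le (hpos u z a x) (prSum_mono μ hμ ?_)
    tauto
  have hposUAX : ∀ (u : Fin nU) (a : Bool) (x : χ) (z : Fin nZ),
      0 < prSum μ (fun ω => U ω = u ∧ A ω = a ∧ X ω = x) := by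
    intro u a x z
    refine lt_of_lt_of_le (hpos u z a x) (prSum_mono μ hμ ?_)
    tauto
  have hposZAX : ∀ (z : Fin nZ) (a : Bool) (x : χ) (u : Fin nU),
      0 < prSum μ (fun ω => Z ω = z ∧ A ω = a ∧ X ω = x) := by
    intro z a x u
    refine lt_of_lt_of_le (hpos u z a x) (prSum_mono μ hμ ?_)
    tauto
  constructor
  · -- part (a)
    intro w z a x
    -- decompose the numerator over values of U
    have hdec : prSum μ (fun ω => W ω = w ∧ Z ω = z ∧ A ω = a ∧ X ω = x)
        = ∑ u : Fin nU,
            prSum μ (fun ω => W ω = w ∧ Z ω = z ∧ A ω = a ∧ U ω = u ∧ X ω = x) := by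
      rw [prSum_decomp μ U (fun ω => W ω = w ∧ Z ω = z ∧ A ω = a ∧ X ω = x)]
      exact Finset.sum_congr rfl fun u _ => prSum_congr μ (by tauto)
    rw [hdec, Finset.sum_div]
    apply Finset.sum_congr rfl
    intro u _
    have hux : prSum μ (fun ω => U ω = u ∧ X ω = x) ≠ 0 := ne_of_gt (hposUX u x z a)
    have hzax : prSum μ (fun ω => Z ω = z ∧ A ω = a ∧ X ω = x) ≠ 0 :=
      ne_of_gt (hposZAX z a x u)
    have key := hWZA w z a u x
    have hre : prSum μ (fun ω => Z ω = z ∧ A ω = a ∧ U ω = u ∧ X ω = x)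
        = prSum μ (fun ω => U ω = u ∧ Z ω = z ∧ A ω = a ∧ X ω = x) :=
      prSum_congr μ (by tauto)
    rw [hre] at key
    field_simp
    linear_combination key
  · -- part (b)
    intro z a x
    have hzax : prSum μ (fun ω => Z ω = z ∧ A ω = a ∧ X ω = x) ≠ 0 := by
      rcases Finset.univ_nonempty_iff.mpr
        (⟨Classical.choice (by
          by_contra h
          rw [not_nonempty_iff] at h
          simp [Finset.univ_eq_empty] at hsum)⟩ : Nonempty Ω) with ⟨ω0, _⟩
      exact ne_of_gt (hposZAX z a x (U ω0))
    -- the independence (i) summed against Y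
    have hkey : ∀ u : Fin nU,
        wSum (fun ω => μ ω * Y ω) (fun ω => Z ω = z ∧ U ω = u ∧ X ω = x ∧ A ω = a)
            * prSum μ (fun ω => U ω = u ∧ X ω = x ∧ A ω = a)
          = wSum (fun ω => μ ω * Y ω) (fun ω => U ω = u ∧ X ω = x ∧ A ω = a)
            * prSum μ (fun ω => Z ω = z ∧ U ω = u ∧ X ω = x ∧ A ω = a) := by
      intro u
      rw [wSum_eq_sum_image μ Y (fun ω => Z ω = z ∧ U ω = u ∧ X ω = x ∧ A ω = a),
        wSum_eq_sum_image μ Y (fun ω => U ω = u ∧ X ω = x ∧ A ω = a),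
        Finset.sum_mul, Finset.sum_mul]
      refine Finset.sum_congr rfl fun y _ => ?_
      linear_combination y * hYZ y z u x a
    -- decompose the numerator of the LHS over values of U
    have hdec : wSum (fun ω => μ ω * Y ω) (fun ω => Z ω = z ∧ A ω = a ∧ X ω = x)
        = ∑ u : Fin nU,
            wSum (fun ω => μ ω * Y ω) (fun ω => Z ω = z ∧ U ω = u ∧ X ω = x ∧ A ω = a) := by
      rw [wSum_decomp U (fun ω => μ ω * Y ω) (fun ω => Z ω = z ∧ A ω = a ∧ X ω = x)]
      exact Finset.sum_congr rfl fun u _ => wSum_congr _ (by tauto)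
    rw [ceSum_eq, hdec, Finset.sum_div]
    apply Finset.sum_congr rfl
    intro u _
    have huxa : prSum μ (fun ω => U ω = u ∧ X ω = x ∧ A ω = a) ≠ 0 :=
      ne_of_gt (hposUXA u x a z)
    have key := hkey u
    -- rewrite predicates in the goal's RHS into the orderings used in `key`
    have e1 : ceSum μ Y (fun ω => U ω = u ∧ A ω = a ∧ X ω = x)
        = wSum (fun ω => μ ω * Y ω) (fun ω => U ω = u ∧ X ω = x ∧ A ω = a)
            / prSum μ (fun ω => U ω = u ∧ X ω = x ∧ A ω = a) := by
      rw [ceSum_eq, wSum_congr (fun ω => μ ω * Y ω)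
        (show ∀ ω, (U ω = u ∧ A ω = a ∧ X ω = x) ↔ (U ω = u ∧ X ω = x ∧ A ω = a) by tauto),
        prSum_congr μ
        (show ∀ ω, (U ω = u ∧ A ω = a ∧ X ω = x) ↔ (U ω = u ∧ X ω = x ∧ A ω = a) by tauto)]
    have e2 : prSum μ (fun ω => U ω = u ∧ Z ω = z ∧ A ω = a ∧ X ω = x)
        = prSum μ (fun ω => Z ω = z ∧ U ω = u ∧ X ω = x ∧ A ω = a) :=
      prSum_congr μ (by tauto)
    rw [e1, e2]
    field_simp
    linear_combination key
end

section
/- In a finite probability model with variables Y (real-valued), U, Z, A, X, suppose E[Y|Z,a,x] = E[Y|U,a,x]·P(U|Z,a,x) and P(W|Z,a,x) = P(W|U,x)·P(U|Z,a,x) hold as matrix/vector identities, where P(W|U,x) has a left inverse P(W|U,x)⁺ and P(U|Z,a,x) has a right inverse P(U|Z,a,x)⁺. Then E[Y(a)|x] := E[Y|U,a,x]·P(U|x) = h(a,x)·P(W|x) for any row vector h(a,x) satisfying E[Y|Z,a,x] = h(a,x)·P(W|Z,a,x), where P(U|x) and P(W|x) are the marginal probability column vectors satisfying P(W|x) = P(W|U,x)·P(U|x).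 -/
open Matrix

theorem Matrix.vecMul_right_cancel_of_mul_eq_one {m n R : Type*} [Fintype m] [Fintype n]
    [DecidableEq m] [CommSemiring R] {C : Matrix m n R} {Cplus : Matrix n m R}
    (hC : C * Cplus = 1) {u v : m → R} (huv : u ᵥ* C = v ᵥ* C) : u = v := by
  simpa only [vecMul_vecMul, hC, vecMul_one] using congrArg (· ᵥ* Cplus) huv

theorem identification_chain_general {nW nU nZ : ℕ}
    (B : Matrix (Fin nW) (Fin nU) ℝ)
    (C : Matrix (Fin nU) (Fin nZ) ℝ) (Cplus : Matrix (Fin nZ) (Fin nU) ℝ)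
    (hC : C * Cplus = 1)
    (u : Fin nU → ℝ)
    (pU : Fin nU → ℝ) (pW : Fin nW → ℝ)
    (hpW : pW = B.mulVec pU)
    (h : Fin nW → ℝ)
    (hh : Matrix.vecMul u C = Matrix.vecMul h (B * C)) :
    u ⬝ᵥ pU = h ⬝ᵥ pW := by
  have hu : u = h ᵥ* B := vecMul_right_cancel_of_mul_eq_one hC (by rwa [vecMul_vecMul])
  rw [hu, hpW, dotProduct_mulVec]

/-- Identification chain of Lemma 1: with `B = P(W|U,x)` left-invertible,
`C = P(U|Z,a,x)` right-invertible, `u = E[Y|U,a,x]`, `pU = P(U|x)`, and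
`pW = P(W|x) = B *ᵥ pU`, any row vector `h` solving `u ᵥ* C = h ᵥ* (B * C)`
satisfies `u ⬝ᵥ pU = h ⬝ᵥ pW`. -/
theorem identification_chain {nW nU nZ : ℕ}
    (B : Matrix (Fin nW) (Fin nU) ℝ) (Bplus : Matrix (Fin nU) (Fin nW) ℝ)
    (hB : Bplus * B = 1)
    (C : Matrix (Fin nU) (Fin nZ) ℝ) (Cplus : Matrix (Fin nZ) (Fin nU) ℝ)
    (hC : C * Cplus = 1)
    (u : Fin nU → ℝ)
    (pU : Fin nU → ℝ) (pW : Fin nW → ℝ)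
    (hpW : pW = B.mulVec pU)
    (h : Fin nW → ℝ)
    (hh : Matrix.vecMul u C = Matrix.vecMul h (B * C)) :
    u ⬝ᵥ pU = h ⬝ᵥ pW :=
  identification_chain_general B C Cplus hC u pU pW hpW h hh
end

section
/- In the binary toy model of the previous context, with the same parameters: the true average treatment effect satisfies ATE = α_A + α_{AU}·E[U], while the confounded contrast satisfies Δ_confounded := E[ δ^Y_A(Z) ] = α_A + E[γ_A + γ_{AZ}Z]·(α_U + α_{AU}) + α_{AU}·E[γ₀ + γ_Z Z], and the bias term Δ_bias := E[ δ^W_A(Z)·R(1−A) ] = E[γ_A + γ_{AZ}Z]·(α_U + α_{AU}) − α_{AU}·E[(γ_A + γ_{AZ}Z)A]. Consequently Δ_confounded − Δ_bias = α_A + α_{AU}·E[(γ₀ + γ_Z Z) + (γ_A + γ_{AZ}Z)A] = ATE, using E[U] = E[(γ₀+γ_Z Z) + (γ_A+γ_{AZ}Z)A]. -/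
noncomputable def ind (b : Bool) : ℝ := if b then 1 else 0

/-! Since `E[U | A, Z] = μ(Z) + τ(Z)·A` is affine in `A`, both treatment contrasts are read off
pointwise in `Z`: `δ^Y_A(Z) = α_A + τ(Z)(α_U + α_{AU}) + α_{AU} μ(Z)` and `δ^W_A(Z) = β_U τ(Z)`.
Evaluating `R` at `1 − A` gives `δ^W_A(Z) R(1 − A) = τ(Z)(α_U + α_{AU}) − α_{AU} τ(Z) A`, so in the
difference the `τ(Z)(α_U + α_{AU})` terms cancel and what remains is
`α_A + α_{AU} E[μ(Z) + τ(Z) A] = α_A + α_{AU} E[U]` by linearity of the expectation. -/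

section WeightedSum

variable {α β : Type*} [Fintype α] [Fintype β] (p : α → β → ℝ)

theorem sum_sum_mul_add (f g : α → β → ℝ) :
    ∑ a, ∑ b, p a b * (f a b + g a b) = ∑ a, ∑ b, p a b * f a b + ∑ a, ∑ b, p a b * g a b := by
  simp only [mul_add, Finset.sum_add_distrib]

theorem sum_sum_mul_sub (f g : α → β → ℝ) :
    ∑ a, ∑ b, p a b * (f a b - g a b) = ∑ a, ∑ b, p a b * f a b - ∑ a, ∑ b, p a b * g a b := by
  simp only [mul_sub, Finset.sum_sub_distrib]

theorem sum_sum_mul_const_mul (c : ℝ) (f : α → β → ℝ) :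
    ∑ a, ∑ b, p a b * (c * f a b) = c * ∑ a, ∑ b, p a b * f a b := by
  simp only [Finset.mul_sum, mul_left_comm]

theorem sum_sum_mul_mul_const (c : ℝ) (f : α → β → ℝ) :
    ∑ a, ∑ b, p a b * (f a b * c) = (∑ a, ∑ b, p a b * f a b) * c := by
  simp only [Finset.sum_mul, mul_assoc]

theorem sum_sum_mul_const {p : α → β → ℝ} (hp : ∑ a, ∑ b, p a b = 1) (c : ℝ) :
    ∑ a, ∑ b, p a b * c = c := by
  simp only [← Finset.sum_mul, hp, one_mul]

end WeightedSum

@[simp]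
theorem ind_true : ind true = 1 := if_pos rfl

@[simp]
theorem ind_false : ind false = 0 := if_neg Bool.false_ne_true

theorem ind_not (b : Bool) : ind (!b) = 1 - ind b := by
  cases b <;> simp

section TreatmentContrast

variable {Z : Type*} {μ τ : Z → ℝ} {EU : Bool → Z → ℝ}

theorem treatment_contrast_outcome {α0 αA αU αAU : ℝ} {EY : Bool → Z → ℝ}
    (hEU : ∀ a z, EU a z = μ z + τ z * ind a)
    (hEY : ∀ a z, EY a z = α0 + αA * ind a + (αU + αAU * ind a) * EU a z) (z : Z) :
    EY true z - EY false z = αA + τ z * (αU + αAU) + αAU * μ z := by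
  simp only [hEY, hEU, ind_true, ind_false]
  ring

theorem treatment_contrast_proxy {β0 βU : ℝ} {EW : Bool → Z → ℝ}
    (hEU : ∀ a z, EU a z = μ z + τ z * ind a) (hEW : ∀ a z, EW a z = β0 + βU * EU a z) (z : Z) :
    EW true z - EW false z = βU * τ z := by
  simp only [hEW, hEU, ind_true, ind_false]
  ring

theorem treatment_contrast_proxy_mul_ratio_not {αU αAU βU : ℝ} (hβ : βU ≠ 0) {R : Bool → ℝ}
    (hR : ∀ a, R a = (αU + αAU * ind a) / βU) (t : ℝ) (a : Bool) :
    βU * t * R (!a) = t * (αU + αAU) - αAU * (t * ind a) := by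
  rw [hR, ind_not]
  field_simp
  ring

end TreatmentContrast

theorem toy_model_decomposition_general
    (α0 αA αU αAU β0 βU γ0 γA γZ γAZ : ℝ) (hβ : βU ≠ 0)
    (p : Bool → Bool → ℝ)
    (hpsum : ∑ a : Bool, ∑ z : Bool, p a z = 1)
    (EU EY EW : Bool → Bool → ℝ)   -- indexed by (a, z)
    (hEU : ∀ a z, EU a z = γ0 + γA * ind a + γZ * ind z + γAZ * ind a * ind z)
    (hEY : ∀ a z, EY a z = α0 + αA * ind a + (αU + αAU * ind a) * EU a z)
    (hEW : ∀ a z, EW a z = β0 + βU * EU a z)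
    (R : Bool → ℝ) (hR : ∀ a, R a = (αU + αAU * ind a) / βU)
    (ATE : ℝ) (hATE : ATE = αA + αAU * ∑ a : Bool, ∑ z : Bool, p a z * EU a z) :
    -- Δ_confounded = α_A + E[γ_A + γ_{AZ} Z](α_U + α_{AU}) + α_{AU} E[γ₀ + γ_Z Z]
    (∑ a : Bool, ∑ z : Bool, p a z * (EY true z - EY false z)
      = αA + (∑ a : Bool, ∑ z : Bool, p a z * (γA + γAZ * ind z)) * (αU + αAU)
          + αAU * ∑ a : Bool, ∑ z : Bool, p a z * (γ0 + γZ * ind z))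
    ∧
    -- Δ_bias = E[γ_A + γ_{AZ} Z](α_U + α_{AU}) − α_{AU} E[(γ_A + γ_{AZ} Z) A]
    (∑ a : Bool, ∑ z : Bool, p a z * ((EW true z - EW false z) * R (!a))
      = (∑ a : Bool, ∑ z : Bool, p a z * (γA + γAZ * ind z)) * (αU + αAU)
          - αAU * ∑ a : Bool, ∑ z : Bool, p a z * (γA + γAZ * ind z) * ind a)
    ∧
    -- Δ_confounded − Δ_bias = α_A + α_{AU} E[(γ₀ + γ_Z Z) + (γ_A + γ_{AZ} Z) A] = ATE
    ((∑ a : Bool, ∑ z : Bool, p a z * (EY true z - EY false z))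
        - ∑ a : Bool, ∑ z : Bool, p a z * ((EW true z - EW false z) * R (!a))
      = αA + αAU * ∑ a : Bool, ∑ z : Bool,
          p a z * ((γ0 + γZ * ind z) + (γA + γAZ * ind z) * ind a)
      ∧
      (∑ a : Bool, ∑ z : Bool, p a z * (EY true z - EY false z))
        - (∑ a : Bool, ∑ z : Bool, p a z * ((EW true z - EW false z) * R (!a)))
      = ATE) := by
  have hEU_affine : ∀ a z, EU a z = (γ0 + γZ * ind z) + (γA + γAZ * ind z) * ind a := fun a z => by
    rw [hEU]; ring
  have confounded : ∑ a, ∑ z, p a z * (EY true z - EY false z)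
      = αA + (∑ a, ∑ z, p a z * (γA + γAZ * ind z)) * (αU + αAU)
          + αAU * ∑ a, ∑ z, p a z * (γ0 + γZ * ind z) := by
    simp only [treatment_contrast_outcome hEU_affine hEY]
    rw [sum_sum_mul_add, sum_sum_mul_add, sum_sum_mul_const hpsum, sum_sum_mul_mul_const,
      sum_sum_mul_const_mul]
  have bias : ∑ a, ∑ z, p a z * ((EW true z - EW false z) * R (!a))
      = (∑ a, ∑ z, p a z * (γA + γAZ * ind z)) * (αU + αAU)
          - αAU * ∑ a, ∑ z, p a z * (γA + γAZ * ind z) * ind a := by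
    simp only [treatment_contrast_proxy hEU_affine hEW, treatment_contrast_proxy_mul_ratio_not hβ hR]
    rw [sum_sum_mul_sub, sum_sum_mul_mul_const, sum_sum_mul_const_mul]
    simp only [mul_assoc]
  have difference : ∑ a, ∑ z, p a z * (EY true z - EY false z)
      - ∑ a, ∑ z, p a z * ((EW true z - EW false z) * R (!a))
      = αA + αAU * ∑ a, ∑ z, p a z * ((γ0 + γZ * ind z) + (γA + γAZ * ind z) * ind a) := by
    rw [confounded, bias, sum_sum_mul_add p (fun _ z => γ0 + γZ * ind z)]
    simp only [← mul_assoc]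
    ring
  refine ⟨confounded, bias, difference, ?_⟩
  simp only [difference, hATE, hEU_affine]

/-- Binary toy model decomposition Δ = Δ_confounded − Δ_bias: with
`E[Y|A,Z,U] = α₀ + α_A A + α_U U + α_{AU} AU`, `E[W|A,Z,U] = β₀ + β_U U` (β_U ≠ 0),
`E[U|A,Z] = γ₀ + γ_A A + γ_Z Z + γ_{AZ} AZ`, joint pmf `p` of `(A,Z)`,
`R(a) = (α_U + α_{AU} a)/β_U`, `ATE = α_A + α_{AU} E[U]`, one has the stated formulas for
`Δ_confounded = E[δ^Y_A(Z)]`, `Δ_bias = E[δ^W_A(Z)·R(1−A)]`, and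
`Δ_confounded − Δ_bias = ATE`. -/
theorem toy_model_decomposition
    (α0 αA αU αAU β0 βU γ0 γA γZ γAZ : ℝ) (hβ : βU ≠ 0)
    (p : Bool → Bool → ℝ) (hp : ∀ a z, 0 ≤ p a z)
    (hpsum : ∑ a : Bool, ∑ z : Bool, p a z = 1)
    (EU EY EW : Bool → Bool → ℝ)   -- indexed by (a, z)
    (hEU : ∀ a z, EU a z = γ0 + γA * ind a + γZ * ind z + γAZ * ind a * ind z)
    (hEY : ∀ a z, EY a z = α0 + αA * ind a + (αU + αAU * ind a) * EU a z)
    (hEW : ∀ a z, EW a z = β0 + βU * EU a z)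
    (R : Bool → ℝ) (hR : ∀ a, R a = (αU + αAU * ind a) / βU)
    (ATE : ℝ) (hATE : ATE = αA + αAU * ∑ a : Bool, ∑ z : Bool, p a z * EU a z) :
    -- Δ_confounded = α_A + E[γ_A + γ_{AZ} Z](α_U + α_{AU}) + α_{AU} E[γ₀ + γ_Z Z]
    (∑ a : Bool, ∑ z : Bool, p a z * (EY true z - EY false z)
      = αA + (∑ a : Bool, ∑ z : Bool, p a z * (γA + γAZ * ind z)) * (αU + αAU)
          + αAU * ∑ a : Bool, ∑ z : Bool, p a z * (γ0 + γZ * ind z))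
    ∧
    -- Δ_bias = E[γ_A + γ_{AZ} Z](α_U + α_{AU}) − α_{AU} E[(γ_A + γ_{AZ} Z) A]
    (∑ a : Bool, ∑ z : Bool, p a z * ((EW true z - EW false z) * R (!a))
      = (∑ a : Bool, ∑ z : Bool, p a z * (γA + γAZ * ind z)) * (αU + αAU)
          - αAU * ∑ a : Bool, ∑ z : Bool, p a z * (γA + γAZ * ind z) * ind a)
    ∧
    -- Δ_confounded − Δ_bias = α_A + α_{AU} E[(γ₀ + γ_Z Z) + (γ_A + γ_{AZ} Z) A] = ATE
    ((∑ a : Bool, ∑ z : Bool, p a z * (EY true z - EY false z))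
        - ∑ a : Bool, ∑ z : Bool, p a z * ((EW true z - EW false z) * R (!a))
      = αA + αAU * ∑ a : Bool, ∑ z : Bool,
          p a z * ((γ0 + γZ * ind z) + (γA + γAZ * ind z) * ind a)
      ∧
      (∑ a : Bool, ∑ z : Bool, p a z * (EY true z - EY false z))
        - (∑ a : Bool, ∑ z : Bool, p a z * ((EW true z - EW false z) * R (!a)))
      = ATE) :=
  toy_model_decomposition_general α0 αA αU αAU β0 βU γ0 γA γZ γAZ hβ p hpsum EU EY EW hEU hEY hEW R
    hR ATE hATE
end
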